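/- arXiv:math/0603089 — 4 statements merged into one kernel-verified Lean document; each statement's English description precedes it below -/
import Mathlib

section
/- Let g = g_{5,3,1(λ1,λ2)} and let F = (α, β, γ, δ, σ) ∈ g*. Then the orbit Ω_F is described as follows: (1) if γ = δ = σ = 0 then Ω_F = {F}; (2) if γ = δ = 0 and σ ≠ 0 then Ω_F = {(α, y, 0, 0, s) : y ∈ ℝ, σs > 0}; (3) if γ = 0, δ ≠ 0, σ = 0 then Ω_F = {(α, y, 0, t, 0) : y ∈ ℝ, δt > 0}; (4) if γ = 0, δ ≠ 0, σ ≠ 0 then Ω_F = {(α, y, 0, t, s) : y ∈ ℝ, σs > 0, t = δ(s/σ)^{λ2}}; (5) if γ ≠ 0, δ = σ = 0 then Ω_F = {(x, y, z, 0, 0) : y ∈ ℝ, γz > 0, λ1·x = λ1·α + γ − z}; (6) if γ ≠ 0, δ = 0, σ ≠ 0 then Ω_F = {(x, y, z, 0, s) : y ∈ ℝ, σs > 0, λ1·x = λ1·α + γ − z and λ1·x = λ1·α + γ(1 − (s/σ)^{λ1})}; (7) if γ ≠ 0, δ ≠ 0, σ = 0 then Ω_F = {(x, y, z, t, 0) :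 y ∈ ℝ, δt > 0, λ1·x = λ1·α + γ − z and λ1·x = λ1·α + γ(1 − (t/δ)^{λ1/λ2})}; (8) if γ ≠ 0, δ ≠ 0, σ ≠ 0 then Ω_F = {(x, y, z, t, s) : y ∈ ℝ, σs > 0, λ1·x = λ1·α + γ − z, λ1·x = λ1·α + γ(1 − (s/σ)^{λ1}), t = δ(s/σ)^{λ2}}. -/
/-- The Lie bracket of g_{5,3,1(λ₁,λ₂)}: [X1,X2] = X3, [X2,X3] = λ₁·X3, [X2,X4] = λ₂·X4, [X2,X5] = X5,
written in coordinates with respect to the basis (X₁, X₂, X₃, X₄, X₅) (all other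
brackets of basis vectors vanish); it is the bilinear extension of the structure
constants above. -/
def bracketg531 (l1 l2 : ℝ) (U V : Fin 5 → ℝ) : Fin 5 → ℝ :=
  ![0, 0,
    (U 0 * V 1 - U 1 * V 0) + l1 * (U 1 * V 2 - U 2 * V 1),
    l2 * (U 1 * V 3 - U 3 * V 1),
    U 1 * V 4 - U 4 * V 1]

/-- The matrix of the adjoint endomorphism ad_U = [U, ·] in the basis (X₁, ..., X₅):
column j holds the coordinates of [U, Xⱼ]. -/
def adg531 (l1 l2 : ℝ) (U : Fin 5 → ℝ) : Matrix (Fin 5) (Fin 5) ℝ :=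
  Matrix.of fun i j => bracketg531 l1 l2 U (Pi.single j 1) i

/-- The orbit Ω_F = { F ∘ exp(ad_U) : U ∈ g } in coordinates with respect to the dual
basis: a functional F' is identified with the vector (F'(X₁), ..., F'(X₅)), so that
F ∘ exp(ad_U) corresponds to the row-vector–matrix product vecMul F (exp (ad_U)). -/
noncomputable def orbitg531 (l1 l2 : ℝ) (F : Fin 5 → ℝ) : Set (Fin 5 → ℝ) :=
  Set.range fun U : Fin 5 → ℝ => Matrix.vecMul F (NormedSpace.exp (adg531 l1 l2 U))


/-!
Write `u = U 1` for the `X₂`-coordinate of `U` (`Fin 5` indices are shifted by one against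
the paper's `X₁, …, X₅`). Only the rows `X₃, X₄, X₅` of `ad_U` are nonzero, and the three
rank-one matrices `Rᵢ` carried by them multiply to zero pairwise and satisfy `Rᵢ² = cᵢ Rᵢ`
with `(c₃, c₄, c₅) = (λ₁u, λ₂u, u)`. Hence `exp ad_U = 1 + Σ φ(cᵢ) Rᵢ` with
`φ(c) = (e^c - 1)/c`, and `F ∘ exp ad_U = (α - γuφ(λ₁u), y, γe^{λ₁u}, δe^{λ₂u}, σe^u)`,
where the second coordinate `y` is affine in `U 0, U 3, U 4` and so takes every real value
once `γ`, `λ₂δ` or `σ` is nonzero. Putting `r = e^u > 0`, the orbit consists of the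
`(x, y, γr^{λ₁}, δr^{λ₂}, σr)` with `λ₁x = λ₁α + γ - γr^{λ₁}`; each case of the theorem
recovers `r` from the first nonzero coordinate among `σ, δ, γ`.
-/

open Matrix

/-- `(exp c - 1) / c`, written as a power series so that it is also defined (as `1`) at
`c = 0`. -/
noncomputable def phiOne (c : ℝ) : ℝ := ∑' n : ℕ, c ^ n / (n + 1).factorial

theorem summable_pow_div_succ_factorial (c : ℝ) :
    Summable fun n : ℕ => c ^ n / (n + 1).factorial := by
  refine .of_norm_bounded (Real.summable_pow_div_factorial |c|) fun n => ?_
  rw [Real.norm_eq_abs, abs_div, abs_pow, Nat.abs_cast]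
  gcongr
  exact n.le_succ

theorem one_add_mul_phiOne (c : ℝ) : 1 + c * phiOne c = Real.exp c := by
  rw [Real.exp_eq_exp_ℝ, NormedSpace.exp_eq_tsum_div]
  beta_reduce
  rw [(Real.summable_pow_div_factorial c).tsum_eq_zero_add, phiOne,
    ← (summable_pow_div_succ_factorial c).tsum_mul_left]
  simp only [pow_succ', Nat.factorial_zero, Nat.cast_one, pow_zero, div_one, mul_div_assoc]

theorem phiOne_ne_zero (c : ℝ) : phiOne c ≠ 0 := by
  intro h
  have := one_add_mul_phiOne c
  rw [h, mul_zero, add_zero, eq_comm, Real.exp_eq_one_iff] at this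
  subst this
  rw [phiOne, tsum_eq_single 0 fun n hn => by simp [zero_pow hn]] at h
  simp at h

theorem NormedSpace.exp_eq_one_add_phiOne_smul {𝔸 : Type*} [NormedRing 𝔸] [NormedAlgebra ℝ 𝔸]
    [CompleteSpace 𝔸] {A : 𝔸} {c : ℝ} (h : A * A = c • A) :
    exp A = 1 + phiOne c • A := by
  have hpow (n : ℕ) : A ^ (n + 1) = c ^ n • A := by
    induction n with
    | zero => simp
    | succ n ih => rw [pow_succ, ih, smul_mul_assoc, h, smul_smul, ← pow_succ]
  rw [exp_eq_tsum ℝ]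
  beta_reduce
  rw [(expSeries_summable' (𝕂 := ℝ) A).tsum_eq_zero_add, phiOne,
    ← (summable_pow_div_succ_factorial c).tsum_smul_const]
  simp only [pow_zero, Nat.factorial_zero, Nat.cast_one, inv_one, one_smul, hpow, smul_smul]
  congr 2 with n
  rw [div_eq_inv_mul]

theorem Matrix.exp_eq_one_add_phiOne_smul {n : Type*} [Fintype n] [DecidableEq n]
    {A : Matrix n n ℝ} {c : ℝ} (h : A * A = c • A) :
    NormedSpace.exp A = 1 + phiOne c • A :=
  open scoped Norms.Operator in NormedSpace.exp_eq_one_add_phiOne_smul h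

theorem vecMulVec_single_mul_vecMulVec_single {R n : Type*} [CommSemiring R] [Fintype n]
    [DecidableEq n] (i j : n) (v w : n → R) :
    vecMulVec (Pi.single i 1) v * vecMulVec (Pi.single j 1) w =
      v j • vecMulVec (Pi.single i 1) w := by
  rw [vecMulVec_mul_vecMulVec, dotProduct_single_one, vecMulVec_smul]

theorem exists_mul_add_mul_add_mul_eq {a b c : ℝ} (h : a ≠ 0 ∨ b ≠ 0 ∨ c ≠ 0)
    (w : ℝ) :
    ∃ p q r : ℝ, a * p + b * q + c * r = w := by
  rcases h with ha | hb | hc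
  · exact ⟨w / a, 0, 0, by field_simp; ring⟩
  · exact ⟨0, w / b, 0, by field_simp; ring⟩
  · exact ⟨0, 0, w / c, by field_simp; ring⟩

theorem Set.ext_fin_five {α : Type*} {S T : Set (Fin 5 → α)}
    (h : ∀ x y z t s, ![x, y, z, t, s] ∈ S ↔ ![x, y, z, t, s] ∈ T) : S = T :=
  Set.ext fun p => by rw [← FinVec.etaExpand_eq p]; exact h _ _ _ _ _

theorem div_pos_of_mul_pos {𝕜 : Type*} [Field 𝕜] [LinearOrder 𝕜] [IsStrictOrderedRing 𝕜]
    {a b : 𝕜} (h : 0 < a * b) : 0 < b / a :=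
  div_pos_iff.2 ((mul_pos_iff.1 h).imp And.symm And.symm)

section g531

variable (l1 l2 : ℝ) (U : Fin 5 → ℝ)

theorem adg531_row_two : adg531 l1 l2 U 2 = ![-U 1, U 0 - l1 * U 2, l1 * U 1, 0, 0] := by
  ext j; fin_cases j <;> simp [adg531, bracketg531, sub_eq_add_neg]

theorem adg531_row_three : adg531 l1 l2 U 3 = ![0, -(l2 * U 3), 0, l2 * U 1, 0] := by
  ext j; fin_cases j <;> simp [adg531, bracketg531]

theorem adg531_row_four : adg531 l1 l2 U 4 = ![0, -U 4, 0, 0, U 1] := by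
  ext j; fin_cases j <;> simp [adg531, bracketg531]

def adRowg531 (i : Fin 5) : Matrix (Fin 5) (Fin 5) ℝ :=
  vecMulVec (Pi.single i 1) (adg531 l1 l2 U i)

theorem adg531_eq_sum_adRowg531 :
    adg531 l1 l2 U = adRowg531 l1 l2 U 2 + adRowg531 l1 l2 U 3 + adRowg531 l1 l2 U 4 := by
  ext i j
  fin_cases i <;> fin_cases j <;> simp [adRowg531, adg531, bracketg531, vecMulVec_apply]

theorem adRowg531_mul_self (i : Fin 5) :
    adRowg531 l1 l2 U i * adRowg531 l1 l2 U i = adg531 l1 l2 U i i • adRowg531 l1 l2 U i :=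
  vecMulVec_single_mul_vecMulVec_single i i _ _

theorem adRowg531_mul_eq_zero {i j : Fin 5} (h : adg531 l1 l2 U i j = 0) :
    adRowg531 l1 l2 U i * adRowg531 l1 l2 U j = 0 := by
  rw [adRowg531, adRowg531, vecMulVec_single_mul_vecMulVec_single, h, zero_smul]

theorem exp_adg531 :
    NormedSpace.exp (adg531 l1 l2 U) =
      1 + phiOne (l1 * U 1) • adRowg531 l1 l2 U 2 + phiOne (l2 * U 1) • adRowg531 l1 l2 U 3
        + phiOne (U 1) • adRowg531 l1 l2 U 4 := by
  have hzero {i j : Fin 5} (h : adg531 l1 l2 U i j = 0) := adRowg531_mul_eq_zero l1 l2 U h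
  have hcomm {i j : Fin 5} (hij : adg531 l1 l2 U i j = 0) (hji : adg531 l1 l2 U j i = 0) :
      Commute (adRowg531 l1 l2 U i) (adRowg531 l1 l2 U j) :=
    (hzero hij).trans (hzero hji).symm
  have hsq {i : Fin 5} {c : ℝ} (h : adg531 l1 l2 U i i = c) :
      NormedSpace.exp (adRowg531 l1 l2 U i) = 1 + phiOne c • adRowg531 l1 l2 U i :=
    Matrix.exp_eq_one_add_phiOne_smul (h ▸ adRowg531_mul_self l1 l2 U i)
  rw [adg531_eq_sum_adRowg531, add_assoc,
    exp_add_of_commute _ _ ((hcomm ?_ ?_).add_right (hcomm ?_ ?_)),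
    exp_add_of_commute _ _ (hcomm ?_ ?_), hsq (c := l1 * U 1) ?_, hsq (c := l2 * U 1) ?_,
    hsq (c := U 1) ?_]
  · simp [mul_add, add_mul, hzero, adg531_row_two, adg531_row_three]
  all_goals simp [adg531_row_two, adg531_row_three, adg531_row_four]

theorem vecMul_exp_adg531 (α β γ δ σ : ℝ) :
    ![α, β, γ, δ, σ] ᵥ* NormedSpace.exp (adg531 l1 l2 U) =
      ![α - γ * U 1 * phiOne (l1 * U 1),
        β + γ * (U 0 - l1 * U 2) * phiOne (l1 * U 1) - δ * (l2 * U 3) * phiOne (l2 * U 1)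
          - σ * U 4 * phiOne (U 1),
        γ * Real.exp (l1 * U 1), δ * Real.exp (l2 * U 1), σ * Real.exp (U 1)] := by
  simp only [exp_adg531, vecMul_add, vecMul_smul, vecMul_one, adRowg531, vecMul_vecMulVec,
    dotProduct_single_one, adg531_row_two, adg531_row_three, adg531_row_four,
    ← one_add_mul_phiOne]
  ext j; fin_cases j <;> simp <;> ring

end g531

section orbits

variable {l1 l2 α β γ δ σ : ℝ}

theorem orbitg531_eq_singleton : orbitg531 l1 l2 ![α, β, 0, 0, 0] = {![α, β, 0, 0, 0]} := by
  ext p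
  simp [orbitg531, vecMul_exp_adg531]

theorem vec_mem_orbitg531_iff {x y z t s : ℝ} (hl1 : l1 ≠ 0)
    (hF : γ ≠ 0 ∨ δ * l2 ≠ 0 ∨ σ ≠ 0) :
    ![x, y, z, t, s] ∈ orbitg531 l1 l2 ![α, β, γ, δ, σ] ↔
      ∃ r > 0, l1 * x = l1 * α + γ - z ∧ z = γ * r ^ l1 ∧ t = δ * r ^ l2 ∧ s = σ * r := by
  simp only [orbitg531, Set.mem_range, vecMul_exp_adg531, vecCons_inj, and_true]
  constructor
  · rintro ⟨U, rfl, -, rfl, rfl, rfl⟩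
    refine ⟨Real.exp (U 1), Real.exp_pos _, ?_, ?_, ?_, rfl⟩
    · linear_combination (-γ) * one_add_mul_phiOne (l1 * U 1)
    · rw [← Real.exp_mul, mul_comm (U 1)]
    · rw [← Real.exp_mul, mul_comm (U 1)]
  · rintro ⟨r, hr, hx, rfl, rfl, rfl⟩
    set u := Real.log r
    have hpow (l : ℝ) : r ^ l = Real.exp (l * u) := by
      rw [Real.rpow_def_of_pos hr, mul_comm]
    obtain ⟨p, q, w, hpqw⟩ := exists_mul_add_mul_add_mul_eq (a := γ * phiOne (l1 * u))
      (b := -(δ * l2 * phiOne (l2 * u))) (c := -(σ * phiOne u))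
      (by simpa [phiOne_ne_zero] using hF) (y - β)
    refine ⟨![p, u, 0, q, w], ?_, ?_, ?_, ?_, ?_⟩ <;>
      simp only [Fin.isValue, cons_val]
    · refine mul_left_cancel₀ hl1 ?_
      linear_combination -hx - γ * one_add_mul_phiOne (l1 * u) + γ * hpow l1
    · linear_combination hpqw
    · rw [hpow]
    · rw [hpow]
    · rw [Real.exp_log hr]

theorem orbitg531_eq_of_sigma_ne_zero (hl1 : l1 ≠ 0) (hσ : σ ≠ 0) :
    orbitg531 l1 l2 ![α, β, γ, δ, σ] = {p | ∃ x y z t s : ℝ, σ * s > 0 ∧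
      l1 * x = l1 * α + γ - z ∧ l1 * x = l1 * α + γ * (1 - (s / σ) ^ l1) ∧
      t = δ * (s / σ) ^ l2 ∧ p = ![x, y, z, t, s]} := by
  refine Set.ext_fin_five fun x y z t s => ?_
  rw [vec_mem_orbitg531_iff hl1 (.inr (.inr hσ))]
  simp only [existsAndEq, true_and, Set.mem_ofPred_eq, vecCons_inj, and_true, exists_and_left]
  constructor
  · rintro ⟨r, hr, hx, rfl, rfl, rfl⟩
    rw [mul_div_cancel_left₀ r hσ, ← mul_assoc]
    exact ⟨mul_pos (mul_self_pos.2 hσ) hr, hx, by linear_combination hx, rfl⟩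
  · rintro ⟨hs, hx, hx', rfl⟩
    exact ⟨s / σ, div_pos_of_mul_pos hs, hx, by linear_combination hx - hx', rfl,
      (mul_div_cancel₀ s hσ).symm⟩

theorem orbitg531_eq_of_delta_ne_zero (hl1 : l1 ≠ 0) (hl2 : l2 ≠ 0) (hδ : δ ≠ 0) :
    orbitg531 l1 l2 ![α, β, γ, δ, 0] = {p | ∃ x y z t : ℝ, δ * t > 0 ∧
      l1 * x = l1 * α + γ - z ∧ l1 * x = l1 * α + γ * (1 - (t / δ) ^ (l1 / l2)) ∧
      p = ![x, y, z, t, 0]} := by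
  refine Set.ext_fin_five fun x y z t s => ?_
  rw [vec_mem_orbitg531_iff hl1 (.inr (.inl (mul_ne_zero hδ hl2)))]
  simp only [existsAndEq, true_and, Set.mem_ofPred_eq, vecCons_inj, and_true, exists_and_left,
    zero_mul]
  constructor
  · rintro ⟨r, hr, hx, rfl, rfl, rfl⟩
    rw [mul_div_cancel_left₀ _ hδ, ← Real.rpow_mul hr.le, mul_div_cancel₀ _ hl2, ← mul_assoc]
    exact ⟨mul_pos (mul_self_pos.2 hδ) (Real.rpow_pos_of_pos hr _), hx,
      by linear_combination hx, rfl⟩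
  · rintro ⟨ht, hx, hx', rfl⟩
    have htδ := div_pos_of_mul_pos ht
    refine ⟨(t / δ) ^ l2⁻¹, Real.rpow_pos_of_pos htδ _, hx, ?_, ?_, rfl⟩
    · rw [← Real.rpow_mul htδ.le, inv_mul_eq_div]
      linear_combination hx - hx'
    · rw [Real.rpow_inv_rpow htδ.le hl2, mul_div_cancel₀ t hδ]

theorem orbitg531_eq_of_gamma_ne_zero (hl1 : l1 ≠ 0) (hγ : γ ≠ 0) :
    orbitg531 l1 l2 ![α, β, γ, 0, 0] = {p | ∃ x y z : ℝ, γ * z > 0 ∧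
      l1 * x = l1 * α + γ - z ∧ p = ![x, y, z, 0, 0]} := by
  refine Set.ext_fin_five fun x y z t s => ?_
  rw [vec_mem_orbitg531_iff hl1 (.inl hγ)]
  simp only [existsAndEq, true_and, Set.mem_ofPred_eq, vecCons_inj, and_true, exists_and_left,
    zero_mul]
  constructor
  · rintro ⟨r, hr, hx, rfl, rfl, rfl⟩
    rw [← mul_assoc]
    exact ⟨mul_pos (mul_self_pos.2 hγ) (Real.rpow_pos_of_pos hr _), hx, rfl, rfl⟩
  · rintro ⟨hz, hx, rfl, rfl⟩
    have hzγ := div_pos_of_mul_pos hz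
    refine ⟨(z / γ) ^ l1⁻¹, Real.rpow_pos_of_pos hzγ _, hx, ?_, rfl, rfl⟩
    rw [Real.rpow_inv_rpow hzγ.le hl1, mul_div_cancel₀ z hγ]

end orbits

theorem kOrbits_g531_general (l1 l2 α β γ δ σ : ℝ) (h10 : l1 ≠ 0) (h20 : l2 ≠ 0) :
    (γ = 0 → δ = 0 → σ = 0 → orbitg531 l1 l2 ![α, β, γ, δ, σ] = {![α, β, γ, δ, σ]}) ∧
    (γ = 0 → δ = 0 → σ ≠ 0 → orbitg531 l1 l2 ![α, β, γ, δ, σ] = {p | ∃ y s : ℝ, σ * s > 0 ∧ p = ![α, y, 0, 0, s]}) ∧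
    (γ = 0 → δ ≠ 0 → σ = 0 → orbitg531 l1 l2 ![α, β, γ, δ, σ] = {p | ∃ y t : ℝ, δ * t > 0 ∧ p = ![α, y, 0, t, 0]}) ∧
    (γ = 0 → δ ≠ 0 → σ ≠ 0 → orbitg531 l1 l2 ![α, β, γ, δ, σ] = {p | ∃ y t s : ℝ, σ * s > 0 ∧ t = δ * (s / σ) ^ l2 ∧ p = ![α, y, 0, t, s]}) ∧
    (γ ≠ 0 → δ = 0 → σ = 0 → orbitg531 l1 l2 ![α, β, γ, δ, σ] = {p | ∃ x y z : ℝ, γ * z > 0 ∧ l1 * x = l1 * α + γ - z ∧ p = ![x, y, z, 0, 0]}) ∧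
    (γ ≠ 0 → δ = 0 → σ ≠ 0 → orbitg531 l1 l2 ![α, β, γ, δ, σ] = {p | ∃ x y z s : ℝ, σ * s > 0 ∧ l1 * x = l1 * α + γ - z ∧ l1 * x = l1 * α + γ * (1 - (s / σ) ^ l1) ∧ p = ![x, y, z, 0, s]}) ∧
    (γ ≠ 0 → δ ≠ 0 → σ = 0 → orbitg531 l1 l2 ![α, β, γ, δ, σ] = {p | ∃ x y z t : ℝ, δ * t > 0 ∧ l1 * x = l1 * α + γ - z ∧ l1 * x = l1 * α + γ * (1 - (t / δ) ^ (l1 / l2)) ∧ p = ![x, y, z, t, 0]}) ∧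
    (γ ≠ 0 → δ ≠ 0 → σ ≠ 0 → orbitg531 l1 l2 ![α, β, γ, δ, σ] = {p | ∃ x y z t s : ℝ, σ * s > 0 ∧ l1 * x = l1 * α + γ - z ∧ l1 * x = l1 * α + γ * (1 - (s / σ) ^ l1) ∧ t = δ * (s / σ) ^ l2 ∧ p = ![x, y, z, t, s]}) := by
  refine ⟨?_, ?_, ?_, ?_, ?_, ?_, ?_, ?_⟩
  · rintro rfl rfl rfl
    exact orbitg531_eq_singleton
  · rintro rfl rfl hσ
    rw [orbitg531_eq_of_sigma_ne_zero h10 hσ]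
    simp [h10, eq_sub_iff_add_eq]
  · rintro rfl hδ rfl
    rw [orbitg531_eq_of_delta_ne_zero h10 h20 hδ]
    simp [h10, eq_sub_iff_add_eq]
  · rintro rfl - hσ
    rw [orbitg531_eq_of_sigma_ne_zero h10 hσ]
    simp [h10, eq_sub_iff_add_eq]
  · rintro hγ rfl rfl
    exact orbitg531_eq_of_gamma_ne_zero h10 hγ
  · rintro - rfl hσ
    rw [orbitg531_eq_of_sigma_ne_zero h10 hσ]
    simp
  · rintro - hδ rfl
    exact orbitg531_eq_of_delta_ne_zero h10 h20 hδ
  · rintro - - hσ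
    exact orbitg531_eq_of_sigma_ne_zero h10 hσ

theorem kOrbits_g531 (l1 l2 α β γ δ σ : ℝ) (h10 : l1 ≠ 0) (h11 : l1 ≠ 1) (h20 : l2 ≠ 0) (h21 : l2 ≠ 1) (h12 : l1 ≠ l2) :
    (γ = 0 → δ = 0 → σ = 0 → orbitg531 l1 l2 ![α, β, γ, δ, σ] = {![α, β, γ, δ, σ]}) ∧
    (γ = 0 → δ = 0 → σ ≠ 0 → orbitg531 l1 l2 ![α, β, γ, δ, σ] = {p | ∃ y s : ℝ, σ * s > 0 ∧ p = ![α, y, 0, 0, s]}) ∧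
    (γ = 0 → δ ≠ 0 → σ = 0 → orbitg531 l1 l2 ![α, β, γ, δ, σ] = {p | ∃ y t : ℝ, δ * t > 0 ∧ p = ![α, y, 0, t, 0]}) ∧
    (γ = 0 → δ ≠ 0 → σ ≠ 0 → orbitg531 l1 l2 ![α, β, γ, δ, σ] = {p | ∃ y t s : ℝ, σ * s > 0 ∧ t = δ * (s / σ) ^ l2 ∧ p = ![α, y, 0, t, s]}) ∧
    (γ ≠ 0 → δ = 0 → σ = 0 → orbitg531 l1 l2 ![α, β, γ, δ, σ] = {p | ∃ x y z : ℝ, γ * z > 0 ∧ l1 * x = l1 * α + γ - z ∧ p = ![x, y, z, 0, 0]}) ∧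
    (γ ≠ 0 → δ = 0 → σ ≠ 0 → orbitg531 l1 l2 ![α, β, γ, δ, σ] = {p | ∃ x y z s : ℝ, σ * s > 0 ∧ l1 * x = l1 * α + γ - z ∧ l1 * x = l1 * α + γ * (1 - (s / σ) ^ l1) ∧ p = ![x, y, z, 0, s]}) ∧
    (γ ≠ 0 → δ ≠ 0 → σ = 0 → orbitg531 l1 l2 ![α, β, γ, δ, σ] = {p | ∃ x y z t : ℝ, δ * t > 0 ∧ l1 * x = l1 * α + γ - z ∧ l1 * x = l1 * α + γ * (1 - (t / δ) ^ (l1 / l2)) ∧ p = ![x, y, z, t, 0]}) ∧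
    (γ ≠ 0 → δ ≠ 0 → σ ≠ 0 → orbitg531 l1 l2 ![α, β, γ, δ, σ] = {p | ∃ x y z t s : ℝ, σ * s > 0 ∧ l1 * x = l1 * α + γ - z ∧ l1 * x = l1 * α + γ * (1 - (s / σ) ^ l1) ∧ t = δ * (s / σ) ^ l2 ∧ p = ![x, y, z, t, s]}) :=
  kOrbits_g531_general l1 l2 α β γ δ σ h10 h20
end

section
/- Let g = g_{5,3,1(λ1,λ2)}. For every F ∈ g*, the skew-symmetric bilinear form B_F has rank either 0 or 2; equivalently, the subspace {X ∈ g : F([X, Y]) = 0 for all Y ∈ g} has dimension 5 or 3. (This is the infinitesimal MD-condition: every coadjoint orbit of the corresponding connected simply connected Lie group G_{5,3,1(λ1,λ2)} has dimension 0 or 2, so it is an MD5-group.) -/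
/-!
The ideal `a = span (X₁, X₃, X₄, X₅)` is abelian and `g = ℝ X₂ ⋉ a`, so with `D = ad X₂` the
bracket is `[U, V] = u₂ D V - v₂ D U`. Hence `B_F = X₂* ∧ (F ∘ D)` is the wedge of two covectors:
it has rank 2 when they are linearly independent and vanishes otherwise. Its radical is the
kernel of `B_Fᵀ`, of dimension `5 - rank B_F`.
-/

open scoped Matrix

/-- The matrix (in the basis (X₁, ..., X₅)) of the skew-symmetric bilinear form
B_F(X, Y) = F([X, Y]); the functional F is identified with its coordinate vector with
respect to the dual basis, acting by the dot product. -/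
def BFg531 (l1 l2 : ℝ) (F : Fin 5 → ℝ) : Matrix (Fin 5) (Fin 5) ℝ :=
  Matrix.of fun i j => F ⬝ᵥ bracketg531 l1 l2 (Pi.single i 1) (Pi.single j 1)

/-- The radical {X ∈ g | F([X, Y]) = 0 for all Y ∈ g} of the form B_F, as a subspace. -/
def radg531 (l1 l2 : ℝ) (F : Fin 5 → ℝ) : Submodule ℝ (Fin 5 → ℝ) where
  carrier := {X | ∀ Y : Fin 5 → ℝ, F ⬝ᵥ bracketg531 l1 l2 X Y = 0}
  zero_mem' := by
    intro Y
    simp [bracketg531, dotProduct, Fin.sum_univ_five]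
  add_mem' := by
    intro a b ha hb Y
    have h1 := ha Y
    have h2 := hb Y
    simp only [bracketg531, dotProduct, Fin.sum_univ_five, Matrix.cons_val_zero,
      Matrix.cons_val_one, Matrix.head_cons, Matrix.cons_val_two, Matrix.tail_cons,
      Matrix.cons_val_three, Matrix.cons_val_four, Pi.add_apply] at h1 h2 ⊢
    linear_combination h1 + h2
  smul_mem' := by
    intro c a ha Y
    have h1 := ha Y
    simp only [bracketg531, dotProduct, Fin.sum_univ_five, Matrix.cons_val_zero,
      Matrix.cons_val_one, Matrix.head_cons, Matrix.cons_val_two, Matrix.tail_cons,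
      Matrix.cons_val_three, Matrix.cons_val_four, Pi.smul_apply, smul_eq_mul] at h1 ⊢
    linear_combination c * h1

open Matrix

namespace Matrix

variable {K m n : Type*} [Field K]

theorem rank_add_finrank_ker_mulVecLin [Fintype n] (A : Matrix m n K) :
    A.rank + Module.finrank K (LinearMap.ker A.mulVecLin) = Fintype.card n := by
  rw [rank, LinearMap.finrank_range_add_finrank_ker, Module.finrank_fintype_fun_eq_card]

theorem vecMulVec_sub_vecMulVec_mulVec [Fintype n] (v w x : n → K) :
    (vecMulVec v w - vecMulVec w v) *ᵥ x = (w ⬝ᵥ x) • v - (v ⬝ᵥ x) • w := by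
  simp only [sub_mulVec, vecMulVec_mulVec, op_smul_eq_smul]

theorem ker_mulVecLin_vecMulVec_sub_vecMulVec [Fintype n] {v w : n → K}
    (h : LinearIndependent K ![v, w]) :
    LinearMap.ker (vecMulVec v w - vecMulVec w v).mulVecLin =
      LinearMap.ker (of ![v, w]).mulVecLin := by
  ext x
  have hM : (of ![v, w]) *ᵥ x = ![v ⬝ᵥ x, w ⬝ᵥ x] := by
    ext i; fin_cases i <;> rfl
  simp only [LinearMap.mem_ker, mulVecLin_apply, vecMulVec_sub_vecMulVec_mulVec, hM]
  constructor
  · intro hx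
    obtain ⟨hw, hv⟩ := LinearIndependent.pair_iff.mp h (w ⬝ᵥ x) (-(v ⬝ᵥ x))
      (by rwa [neg_smul, ← sub_eq_add_neg])
    simp [hw, neg_eq_zero.mp hv]
  · intro hx
    have hv : v ⬝ᵥ x = 0 := congrFun hx 0
    have hw : w ⬝ᵥ x = 0 := congrFun hx 1
    simp [hv, hw]

theorem rank_vecMulVec_sub_vecMulVec_of_linearIndependent [Fintype n] {v w : n → K}
    (h : LinearIndependent K ![v, w]) : (vecMulVec v w - vecMulVec w v).rank = 2 := by
  have hA := rank_add_finrank_ker_mulVecLin (vecMulVec v w - vecMulVec w v)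
  have hM := rank_add_finrank_ker_mulVecLin (of ![v, w])
  have hM2 : (of ![v, w]).rank = 2 := h.rank_matrix
  rw [ker_mulVecLin_vecMulVec_sub_vecMulVec h] at hA
  omega

theorem vecMulVec_sub_vecMulVec_eq_zero_of_not_linearIndependent {v w : n → K}
    (h : ¬LinearIndependent K ![v, w]) : vecMulVec v w - vecMulVec w v = 0 := by
  rcases eq_or_ne v 0 with rfl | hv
  · simp
  obtain ⟨a, rfl⟩ : ∃ a : K, a • v = w := by simpa [LinearIndependent.pair_iff' hv] using h
  rw [vecMulVec_smul, smul_vecMulVec, sub_self]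

theorem rank_vecMulVec_sub_vecMulVec_eq_zero_or_two [Fintype n] (v w : n → K) :
    (vecMulVec v w - vecMulVec w v).rank = 0 ∨ (vecMulVec v w - vecMulVec w v).rank = 2 := by
  by_cases h : LinearIndependent K ![v, w]
  · exact Or.inr (rank_vecMulVec_sub_vecMulVec_of_linearIndependent h)
  · rw [vecMulVec_sub_vecMulVec_eq_zero_of_not_linearIndependent h]
    exact Or.inl rank_zero

end Matrix

-- Coordinates are 0-indexed: `Pi.single 1 1` is `X₂`.
theorem bracketg531_eq (l1 l2 : ℝ) (U V : Fin 5 → ℝ) :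
    bracketg531 l1 l2 U V =
      U 1 • bracketg531 l1 l2 (Pi.single 1 1) V - V 1 • bracketg531 l1 l2 (Pi.single 1 1) U := by
  ext i
  fin_cases i <;> simp [bracketg531] <;> ring

theorem BFg531_eq (l1 l2 : ℝ) (F : Fin 5 → ℝ) :
    BFg531 l1 l2 F = vecMulVec (Pi.single 1 1) (BFg531 l1 l2 F 1) -
      vecMulVec (BFg531 l1 l2 F 1) (Pi.single 1 1) := by
  ext i j
  rw [BFg531, of_apply, bracketg531_eq]
  by_cases hi : i = 1 <;> by_cases hj : j = 1 <;> simp [vecMulVec, hi, hj]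

theorem dotProduct_bracketg531 (l1 l2 : ℝ) (F X Y : Fin 5 → ℝ) :
    F ⬝ᵥ bracketg531 l1 l2 X Y = X ⬝ᵥ (BFg531 l1 l2 F *ᵥ Y) := by
  simp only [dotProduct, mulVec, BFg531, of_apply, bracketg531, Fin.sum_univ_five, Fin.isValue,
    Pi.single_apply, Fin.reduceEq, if_true, if_false, cons_val, cons_val_zero, cons_val_one]
  ring

theorem radg531_eq_ker (l1 l2 : ℝ) (F : Fin 5 → ℝ) :
    radg531 l1 l2 F = LinearMap.ker (BFg531 l1 l2 F)ᵀ.mulVecLin := by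
  ext X
  simp only [LinearMap.mem_ker, mulVecLin_apply, mulVec_transpose, ← dotProduct_eq_zero_iff,
    ← dotProduct_mulVec, ← dotProduct_bracketg531]
  rfl

theorem md_condition_g531_general (l1 l2 : ℝ) (F : Fin 5 → ℝ) :
    ((BFg531 l1 l2 F).rank = 0 ∨ (BFg531 l1 l2 F).rank = 2) ∧
    (Module.finrank ℝ (radg531 l1 l2 F) = 5 ∨ Module.finrank ℝ (radg531 l1 l2 F) = 3) := by
  have hrank := rank_vecMulVec_sub_vecMulVec_eq_zero_or_two (Pi.single 1 1) (BFg531 l1 l2 F 1)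
  rw [← BFg531_eq] at hrank
  have hrad := rank_add_finrank_ker_mulVecLin (BFg531 l1 l2 F)ᵀ
  rw [rank_transpose, ← radg531_eq_ker, Fintype.card_fin] at hrad
  omega

/-- For every functional F, the skew-symmetric form B_F has rank 0 or 2; equivalently,
its radical {X | F([X, Y]) = 0 for all Y} has dimension 5 or 3 (the infinitesimal
MD-condition: every coadjoint orbit has dimension 0 or 2). -/
theorem md_condition_g531 (l1 l2 : ℝ) (h10 : l1 ≠ 0) (h11 : l1 ≠ 1) (h20 : l2 ≠ 0) (h21 : l2 ≠ 1) (h12 : l1 ≠ l2) (F : Fin 5 → ℝ) :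
    ((BFg531 l1 l2 F).rank = 0 ∨ (BFg531 l1 l2 F).rank = 2) ∧
    (Module.finrank ℝ (radg531 l1 l2 F) = 5 ∨ Module.finrank ℝ (radg531 l1 l2 F) = 3) :=
  md_condition_g531_general l1 l2 F
end

section
/- Let g = g_{5,3,1(λ1,λ2)}, let F = (α, β, γ, δ, σ) ∈ g*, and let U = a·X1 + b·X2 + c·X3 + d·X4 + f·X5 ∈ g with a, b, c, d, f ∈ ℝ. Then the coordinates (x, y, z, t, s) of F ∘ exp(ad_U) are: x = α − γ·Σ_{n=1}^{∞} b^n λ1^{n−1}/n!, y = β + γ(a − c·λ1)·Σ_{n=1}^{∞} (b·λ1)^{n−1}/n! − δ·d·Σ_{n=1}^{∞} b^{n−1} λ2^{n}/n! − σ·f·Σ_{n=1}^{∞} b^{n−1}/n!, z = γ·e^{b·λ1}, t = δ·e^{b·λ2}, s = σ·e^{b}. -/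
/-! Every row of `ad_U` is its diagonal entry plus entries in the columns of `X₁, X₂`, and the
rows of `X₁, X₂` vanish. Hence `ad_U² = D · ad_U` for the diagonal part `D`, so
`ad_U^(n+1) = Dⁿ · ad_U` and `exp ad_U = 1 + φ(D) · ad_U` with `φ(x) = ∑ xⁿ/(n+1)! = (eˣ - 1)/x`.
Reading off the coordinates only needs `1 + x φ(x) = eˣ`. -/

open Nat Matrix NormedSpace

theorem pow_succ_eq_pow_mul_of_mul_self_eq_mul {M : Type*} [Monoid M] {x y : M}
    (h : x * x = y * x) (n : ℕ) : x ^ (n + 1) = y ^ n * x := by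
  induction n with
  | zero => simp
  | succ n ih => rw [pow_succ, ih, mul_assoc, h, ← mul_assoc, ← pow_succ]

theorem NormedSpace.exp_eq_one_add_mul_of_mul_self_eq_mul {𝔸 : Type*} [Ring 𝔸] [Algebra ℝ 𝔸]
    [TopologicalSpace 𝔸] [IsTopologicalRing 𝔸] [T2Space 𝔸] {x y s : 𝔸} (h : x * x = y * x)
    (hs : HasSum (fun n : ℕ => ((n + 1)! : ℝ)⁻¹ • y ^ n) s) :
    exp x = 1 + s * x := by
  rw [exp_eq_tsum ℝ]
  refine HasSum.tsum_eq ?_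
  have hshift : HasSum (fun n : ℕ => ((n + 1)! : ℝ)⁻¹ • x ^ (n + 1)) (s * x) := by
    simpa only [pow_succ_eq_pow_mul_of_mul_self_eq_mul h, smul_mul_assoc] using hs.mul_right x
  simpa using HasSum.zero_add (f := fun n : ℕ => (n ! : ℝ)⁻¹ • x ^ n) hshift

theorem Real.summable_pow_div_factorial_succ (x : ℝ) :
    Summable fun n : ℕ => x ^ n / (n + 1)! := by
  refine .of_norm_bounded (Real.summable_pow_div_factorial |x|) fun n => ?_
  rw [norm_div, norm_pow, Real.norm_eq_abs, Real.norm_natCast]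
  gcongr
  exact Nat.le_succ n

theorem Real.one_add_mul_tsum_pow_div_factorial_succ (x : ℝ) :
    1 + x * ∑' n : ℕ, x ^ n / (n + 1)! = Real.exp x := by
  rw [Real.exp_eq_exp_ℝ, ← (expSeries_div_hasSum_exp x).tsum_eq,
    (Real.summable_pow_div_factorial x).tsum_eq_zero_add, ← tsum_mul_left]
  simp only [pow_zero, factorial_zero, cast_one, div_one]
  congr 1
  exact tsum_congr fun n => by ring

theorem Matrix.exp_eq_one_add_diagonal_mul_of_mul_self_eq_diagonal_mul {ι : Type*} [Fintype ι]
    [DecidableEq ι] {M : Matrix ι ι ℝ} {d : ι → ℝ} (h : M * M = diagonal d * M) :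
    exp M = 1 + diagonal (fun i => ∑' n : ℕ, d i ^ n / (n + 1)!) * M := by
  refine NormedSpace.exp_eq_one_add_mul_of_mul_self_eq_mul h ?_
  simp only [diagonal_pow, ← diagonal_smul]
  refine HasSum.matrix_diagonal (Pi.hasSum.mpr fun i => ?_)
  simpa [div_eq_inv_mul] using (Real.summable_pow_div_factorial_succ (d i)).hasSum

theorem adg531_mul_self (l1 l2 : ℝ) (U : Fin 5 → ℝ) :
    adg531 l1 l2 U * adg531 l1 l2 U
      = diagonal ![0, 0, l1 * U 1, l2 * U 1, U 1] * adg531 l1 l2 U := by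
  ext i j
  fin_cases i <;> fin_cases j <;>
    simp [adg531, bracketg531, Matrix.mul_apply, Fin.sum_univ_five, Pi.single_apply]

theorem coadjoint_action_g531_general (l1 l2 α β γ δ σ a b c d f : ℝ) :
    Matrix.vecMul ![α, β, γ, δ, σ] (NormedSpace.exp (adg531 l1 l2 ![a, b, c, d, f])) 0
      = α - γ * ∑' n : ℕ, b ^ (n + 1) * l1 ^ n / (Nat.factorial (n + 1) : ℝ) ∧
    Matrix.vecMul ![α, β, γ, δ, σ] (NormedSpace.exp (adg531 l1 l2 ![a, b, c, d, f])) 1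
      = β + γ * (a - c * l1) * (∑' n : ℕ, (b * l1) ^ n / (Nat.factorial (n + 1) : ℝ))
        - δ * d * (∑' n : ℕ, b ^ n * l2 ^ (n + 1) / (Nat.factorial (n + 1) : ℝ))
        - σ * f * (∑' n : ℕ, b ^ n / (Nat.factorial (n + 1) : ℝ)) ∧
    Matrix.vecMul ![α, β, γ, δ, σ] (NormedSpace.exp (adg531 l1 l2 ![a, b, c, d, f])) 2
      = γ * Real.exp (b * l1) ∧
    Matrix.vecMul ![α, β, γ, δ, σ] (NormedSpace.exp (adg531 l1 l2 ![a, b, c, d, f])) 3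
      = δ * Real.exp (b * l2) ∧
    Matrix.vecMul ![α, β, γ, δ, σ] (NormedSpace.exp (adg531 l1 l2 ![a, b, c, d, f])) 4
      = σ * Real.exp b := by
  have hexp := exp_eq_one_add_diagonal_mul_of_mul_self_eq_diagonal_mul
    (adg531_mul_self l1 l2 ![a, b, c, d, f])
  have hx : ∑' n : ℕ, b ^ (n + 1) * l1 ^ n / (n + 1)! = b * ∑' n : ℕ, (l1 * b) ^ n / (n + 1)! := by
    rw [← tsum_mul_left]
    exact tsum_congr fun n => by ring
  have hy : ∑' n : ℕ, b ^ n * l2 ^ (n + 1) / (n + 1)! = l2 * ∑' n : ℕ, (l2 * b) ^ n / (n + 1)! := by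
    rw [← tsum_mul_left]
    exact tsum_congr fun n => by ring
  rw [mul_comm b l1, mul_comm b l2]
  simp only [hexp, vecMul_add, vecMul_one, ← vecMul_vecMul]
  refine ⟨?_, ?_, ?_, ?_, ?_⟩ <;>
    simp [vecMul, dotProduct, Fin.sum_univ_five, adg531, bracketg531, Pi.single_apply]
  · rw [hx]; ring
  · rw [hy]; ring
  · rw [← Real.one_add_mul_tsum_pow_div_factorial_succ]; ring
  · rw [← Real.one_add_mul_tsum_pow_div_factorial_succ]; ring
  · rw [← Real.one_add_mul_tsum_pow_div_factorial_succ]; ring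

/-- For U = a·X1 + b·X2 + c·X3 + d·X4 + f·X5 and F = (α, β, γ, δ, σ) ∈ g* for
g = g_{5,3,1(λ₁,λ₂)}, the coordinates (x, y, z, t, s) of F ∘ exp(ad_U) (i.e. of
vecMul F (exp (ad_U)) in the dual basis) are:
x = α − γ·Σ_{n≥1} bⁿλ₁ⁿ⁻¹/n!,
y = β + γ(a − cλ₁)·Σ_{n≥1} (bλ₁)ⁿ⁻¹/n! − δd·Σ_{n≥1} bⁿ⁻¹λ₂ⁿ/n! − σf·Σ_{n≥1} bⁿ⁻¹/n!,
z = γ·e^{bλ₁}, t = δ·e^{bλ₂}, s = σ·e^{b}. -/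
theorem coadjoint_action_g531 (l1 l2 α β γ δ σ a b c d f : ℝ)
    (h10 : l1 ≠ 0) (h11 : l1 ≠ 1) (h20 : l2 ≠ 0) (h21 : l2 ≠ 1) (h12 : l1 ≠ l2) :
    Matrix.vecMul ![α, β, γ, δ, σ] (NormedSpace.exp (adg531 l1 l2 ![a, b, c, d, f])) 0
      = α - γ * ∑' n : ℕ, b ^ (n + 1) * l1 ^ n / (Nat.factorial (n + 1) : ℝ) ∧
    Matrix.vecMul ![α, β, γ, δ, σ] (NormedSpace.exp (adg531 l1 l2 ![a, b, c, d, f])) 1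
      = β + γ * (a - c * l1) * (∑' n : ℕ, (b * l1) ^ n / (Nat.factorial (n + 1) : ℝ))
        - δ * d * (∑' n : ℕ, b ^ n * l2 ^ (n + 1) / (Nat.factorial (n + 1) : ℝ))
        - σ * f * (∑' n : ℕ, b ^ n / (Nat.factorial (n + 1) : ℝ)) ∧
    Matrix.vecMul ![α, β, γ, δ, σ] (NormedSpace.exp (adg531 l1 l2 ![a, b, c, d, f])) 2
      = γ * Real.exp (b * l1) ∧
    Matrix.vecMul ![α, β, γ, δ, σ] (NormedSpace.exp (adg531 l1 l2 ![a, b, c, d, f])) 3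
      = δ * Real.exp (b * l2) ∧
    Matrix.vecMul ![α, β, γ, δ, σ] (NormedSpace.exp (adg531 l1 l2 ![a, b, c, d, f])) 4
      = σ * Real.exp b :=
  coadjoint_action_g531_general l1 l2 α β γ δ σ a b c d f
end

section
/- Let g be any one of the eight Lie algebras g_{5,3,1(λ1,λ2)}, g_{5,3,2(λ)}, g_{5,3,3(λ)}, g_{5,3,4}, g_{5,3,5(λ)}, g_{5,3,6(λ)}, g_{5,3,7}, g_{5,3,8(λ,φ)} (with parameters in the indicated ranges). For every F ∈ g*, the orbit Ω_F equals the single point {F} if and only if F(X3) = F(X4) = F(X5) = 0. Consequently, the union V of all orbits with more than one point is the set { F ∈ g* : (F(X3), F(X4), F(X5)) ≠ (0, 0, 0) }, which is an open subset of g*. -/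
def bracketg532 (l : ℝ) (U V : Fin 5 → ℝ) : Fin 5 → ℝ :=
  ![0, 0,
    (U 0 * V 1 - U 1 * V 0) + (U 1 * V 2 - U 2 * V 1),
    U 1 * V 3 - U 3 * V 1,
    l * (U 1 * V 4 - U 4 * V 1)]

def adg532 (l : ℝ) (U : Fin 5 → ℝ) : Matrix (Fin 5) (Fin 5) ℝ :=
  Matrix.of fun i j => bracketg532 l U (Pi.single j 1) i

noncomputable def orbitg532 (l : ℝ) (F : Fin 5 → ℝ) : Set (Fin 5 → ℝ) :=
  Set.range fun U : Fin 5 → ℝ => Matrix.vecMul F (NormedSpace.exp (adg532 l U))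

def bracketg533 (l : ℝ) (U V : Fin 5 → ℝ) : Fin 5 → ℝ :=
  ![0, 0,
    (U 0 * V 1 - U 1 * V 0) + l * (U 1 * V 2 - U 2 * V 1),
    U 1 * V 3 - U 3 * V 1,
    U 1 * V 4 - U 4 * V 1]

def adg533 (l : ℝ) (U : Fin 5 → ℝ) : Matrix (Fin 5) (Fin 5) ℝ :=
  Matrix.of fun i j => bracketg533 l U (Pi.single j 1) i

noncomputable def orbitg533 (l : ℝ) (F : Fin 5 → ℝ) : Set (Fin 5 → ℝ) :=
  Set.range fun U : Fin 5 → ℝ => Matrix.vecMul F (NormedSpace.exp (adg533 l U))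

def bracketg534 (U V : Fin 5 → ℝ) : Fin 5 → ℝ :=
  ![0, 0,
    (U 0 * V 1 - U 1 * V 0) + (U 1 * V 2 - U 2 * V 1),
    U 1 * V 3 - U 3 * V 1,
    U 1 * V 4 - U 4 * V 1]

def adg534 (U : Fin 5 → ℝ) : Matrix (Fin 5) (Fin 5) ℝ :=
  Matrix.of fun i j => bracketg534 U (Pi.single j 1) i

noncomputable def orbitg534 (F : Fin 5 → ℝ) : Set (Fin 5 → ℝ) :=
  Set.range fun U : Fin 5 → ℝ => Matrix.vecMul F (NormedSpace.exp (adg534 U))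

def bracketg535 (l : ℝ) (U V : Fin 5 → ℝ) : Fin 5 → ℝ :=
  ![0, 0,
    (U 0 * V 1 - U 1 * V 0) + l * (U 1 * V 2 - U 2 * V 1),
    (U 1 * V 3 - U 3 * V 1) + (U 1 * V 4 - U 4 * V 1),
    U 1 * V 4 - U 4 * V 1]

def adg535 (l : ℝ) (U : Fin 5 → ℝ) : Matrix (Fin 5) (Fin 5) ℝ :=
  Matrix.of fun i j => bracketg535 l U (Pi.single j 1) i

noncomputable def orbitg535 (l : ℝ) (F : Fin 5 → ℝ) : Set (Fin 5 → ℝ) :=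
  Set.range fun U : Fin 5 → ℝ => Matrix.vecMul F (NormedSpace.exp (adg535 l U))

def bracketg536 (l : ℝ) (U V : Fin 5 → ℝ) : Fin 5 → ℝ :=
  ![0, 0,
    (U 0 * V 1 - U 1 * V 0) + (U 1 * V 2 - U 2 * V 1) + (U 1 * V 3 - U 3 * V 1),
    U 1 * V 3 - U 3 * V 1,
    l * (U 1 * V 4 - U 4 * V 1)]

def adg536 (l : ℝ) (U : Fin 5 → ℝ) : Matrix (Fin 5) (Fin 5) ℝ :=
  Matrix.of fun i j => bracketg536 l U (Pi.single j 1) i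

noncomputable def orbitg536 (l : ℝ) (F : Fin 5 → ℝ) : Set (Fin 5 → ℝ) :=
  Set.range fun U : Fin 5 → ℝ => Matrix.vecMul F (NormedSpace.exp (adg536 l U))

def bracketg537 (U V : Fin 5 → ℝ) : Fin 5 → ℝ :=
  ![0, 0,
    (U 0 * V 1 - U 1 * V 0) + (U 1 * V 2 - U 2 * V 1) + (U 1 * V 3 - U 3 * V 1),
    (U 1 * V 3 - U 3 * V 1) + (U 1 * V 4 - U 4 * V 1),
    U 1 * V 4 - U 4 * V 1]

def adg537 (U : Fin 5 → ℝ) : Matrix (Fin 5) (Fin 5) ℝ :=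
  Matrix.of fun i j => bracketg537 U (Pi.single j 1) i

noncomputable def orbitg537 (F : Fin 5 → ℝ) : Set (Fin 5 → ℝ) :=
  Set.range fun U : Fin 5 → ℝ => Matrix.vecMul F (NormedSpace.exp (adg537 U))

noncomputable def bracketg538 (l φ : ℝ) (U V : Fin 5 → ℝ) : Fin 5 → ℝ :=
  ![0, 0,
    (U 0 * V 1 - U 1 * V 0) + Real.cos φ * (U 1 * V 2 - U 2 * V 1) - Real.sin φ * (U 1 * V 3 - U 3 * V 1),
    Real.sin φ * (U 1 * V 2 - U 2 * V 1) + Real.cos φ * (U 1 * V 3 - U 3 * V 1),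
    l * (U 1 * V 4 - U 4 * V 1)]

noncomputable def adg538 (l φ : ℝ) (U : Fin 5 → ℝ) : Matrix (Fin 5) (Fin 5) ℝ :=
  Matrix.of fun i j => bracketg538 l φ U (Pi.single j 1) i

noncomputable def orbitg538 (l φ : ℝ) (F : Fin 5 → ℝ) : Set (Fin 5 → ℝ) :=
  Set.range fun U : Fin 5 → ℝ => Matrix.vecMul F (NormedSpace.exp (adg538 l φ U))

open NormedSpace Matrix

section CoadjointOrbit

variable {𝕂 n V : Type*} [RCLike 𝕂] [Fintype n] [DecidableEq n]

namespace Matrix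

open scoped Matrix.Norms.Operator in
theorem hasDerivAt_vecMul_exp_smul (F : n → 𝕂) (A : Matrix n n 𝕂) (t : 𝕂) :
    HasDerivAt (fun s : 𝕂 => F ᵥ* exp (s • A)) ((F ᵥ* A) ᵥ* exp (t • A)) t := by
  rw [vecMul_vecMul]
  exact (vecMulBilin 𝕂 𝕂 F).toContinuousLinearMap.hasFDerivAt.comp_hasDerivAt t
    (hasDerivAt_exp_smul_const' A t)

theorem vecMul_exp_eq_self {F : n → 𝕂} {A : Matrix n n 𝕂} (h : F ᵥ* A = 0) :
    F ᵥ* exp A = F := by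
  have hconst := is_const_of_deriv_eq_zero
    (fun t => (hasDerivAt_vecMul_exp_smul F A t).differentiableAt)
    (fun t => by simp [(hasDerivAt_vecMul_exp_smul F A t).deriv, h]) 1 0
  simpa using hconst

theorem vecMul_eq_zero_of_vecMul_exp_smul_eq_self {F : n → 𝕂} {A : Matrix n n 𝕂}
    (h : ∀ t : 𝕂, F ᵥ* exp (t • A) = F) : F ᵥ* A = 0 := by
  have hderiv := hasDerivAt_vecMul_exp_smul F A 0
  simp only [h, zero_smul, exp_zero, vecMul_one] at hderiv
  exact (hasDerivAt_const (0 : 𝕂) F).unique hderiv |>.symm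

end Matrix

variable [AddCommGroup V] [Module 𝕂 V]

noncomputable def coadjointOrbit (ad : V → Matrix n n 𝕂) (F : n → 𝕂) : Set (n → 𝕂) :=
  Set.range fun U => F ᵥ* exp (ad U)

variable {ad : V → Matrix n n 𝕂} (hsmul : ∀ (t : 𝕂) U, ad (t • U) = t • ad U)
include hsmul

theorem self_mem_coadjointOrbit (F : n → 𝕂) : F ∈ coadjointOrbit ad F :=
  ⟨0, by simp [show ad 0 = 0 by simpa using hsmul 0 0]⟩

theorem mem_coadjointOrbit_symm {F G : n → 𝕂} (hG : G ∈ coadjointOrbit ad F) :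
    F ∈ coadjointOrbit ad G := by
  obtain ⟨U, rfl⟩ := hG
  refine ⟨-U, ?_⟩
  dsimp only
  rw [show ad (-U) = -ad U by simpa using hsmul (-1) U, vecMul_vecMul,
    ← Matrix.exp_add_of_commute _ _ ((Commute.refl (ad U)).neg_right), add_neg_cancel, exp_zero,
    vecMul_one]

theorem coadjointOrbit_eq_singleton_iff (F : n → 𝕂) :
    coadjointOrbit ad F = {F} ↔ ∀ U, F ᵥ* ad U = 0 := by
  constructor
  · intro hF U
    refine vecMul_eq_zero_of_vecMul_exp_smul_eq_self fun t => ?_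
    rw [← hsmul, ← Set.mem_singleton_iff, ← hF]
    exact Set.mem_range_self _
  · intro hF
    exact (Set.range_eq_singleton_iff ..).2 fun U => vecMul_exp_eq_self (hF U)

theorem coadjointOrbit_nontrivial_iff (F : n → 𝕂) :
    (coadjointOrbit ad F).Nontrivial ↔ ∃ U, F ᵥ* ad U ≠ 0 := by
  rw [Set.nontrivial_iff_ne_singleton (self_mem_coadjointOrbit hsmul F),
    Ne, coadjointOrbit_eq_singleton_iff hsmul]
  push Not
  rfl

theorem biUnion_nontrivial_coadjointOrbit :
    ⋃ F ∈ {F | (coadjointOrbit ad F).Nontrivial}, coadjointOrbit ad F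
      = {F | ∃ U, F ᵥ* ad U ≠ 0} := by
  ext G
  simp only [Set.mem_iUnion, Set.mem_ofPred_eq, exists_prop]
  constructor
  · rintro ⟨F, hF, hG⟩
    by_contra! hfix
    rw [← coadjointOrbit_eq_singleton_iff hsmul] at hfix
    have hFG : F = G := by simpa [hfix] using mem_coadjointOrbit_symm hsmul hG
    exact hF.ne_singleton (hFG ▸ hfix)
  · exact fun hG =>
      ⟨G, (coadjointOrbit_nontrivial_iff hsmul G).2 hG, self_mem_coadjointOrbit hsmul G⟩

theorem coadjointOrbit_classification {p : (n → 𝕂) → Prop}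
    (hp : ∀ F, (∀ U, F ᵥ* ad U = 0) ↔ p F) :
    (∀ F, coadjointOrbit ad F = {F} ↔ p F) ∧
      ⋃ F ∈ {F | (coadjointOrbit ad F).Nontrivial}, coadjointOrbit ad F = {F | ¬p F} := by
  refine ⟨fun F => (coadjointOrbit_eq_singleton_iff hsmul F).trans (hp F), ?_⟩
  rw [biUnion_nontrivial_coadjointOrbit hsmul]
  ext F
  simp only [Set.mem_ofPred_eq, ← hp, not_forall]

end CoadjointOrbit

theorem adg531_smul (l1 l2 t : ℝ) (U : Fin 5 → ℝ) :
    adg531 l1 l2 (t • U) = t • adg531 l1 l2 U := by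
  ext i j; fin_cases i <;> simp [adg531, bracketg531, smul_eq_mul] <;> ring

theorem adg532_smul (l t : ℝ) (U : Fin 5 → ℝ) : adg532 l (t • U) = t • adg532 l U := by
  ext i j; fin_cases i <;> simp [adg532, bracketg532, smul_eq_mul] <;> ring

theorem adg533_smul (l t : ℝ) (U : Fin 5 → ℝ) : adg533 l (t • U) = t • adg533 l U := by
  ext i j; fin_cases i <;> simp [adg533, bracketg533, smul_eq_mul] <;> ring

theorem adg534_smul (t : ℝ) (U : Fin 5 → ℝ) : adg534 (t • U) = t • adg534 U := by
  ext i j; fin_cases i <;> simp [adg534, bracketg534, smul_eq_mul] <;> ring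

theorem adg535_smul (l t : ℝ) (U : Fin 5 → ℝ) : adg535 l (t • U) = t • adg535 l U := by
  ext i j; fin_cases i <;> simp [adg535, bracketg535, smul_eq_mul] <;> ring

theorem adg536_smul (l t : ℝ) (U : Fin 5 → ℝ) : adg536 l (t • U) = t • adg536 l U := by
  ext i j; fin_cases i <;> simp [adg536, bracketg536, smul_eq_mul] <;> ring

theorem adg537_smul (t : ℝ) (U : Fin 5 → ℝ) : adg537 (t • U) = t • adg537 U := by
  ext i j; fin_cases i <;> simp [adg537, bracketg537, smul_eq_mul] <;> ring

theorem adg538_smul (l φ t : ℝ) (U : Fin 5 → ℝ) : adg538 l φ (t • U) = t • adg538 l φ U := by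
  ext i j; fin_cases i <;> simp [adg538, bracketg538, smul_eq_mul] <;> ring

theorem forall_vecMul_adg531_eq_zero_iff {l1 l2 : ℝ} (hl2 : l2 ≠ 0) (F : Fin 5 → ℝ) :
    (∀ U, F ᵥ* adg531 l1 l2 U = 0) ↔ F 2 = 0 ∧ F 3 = 0 ∧ F 4 = 0 := by
  refine ⟨fun h => ?_, fun ⟨h2, h3, h4⟩ U => ?_⟩
  · have hX (k : Fin 5) := congrFun (h (Pi.single k 1)) 1
    simp only [vecMul, dotProduct, Fin.sum_univ_five, adg531, bracketg531, of_apply] at hX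
    have hX1 : F 2 = 0 := by simpa using hX 0
    have hX4 : F 3 * l2 = 0 := by simpa using hX 3
    have hX5 : F 4 = 0 := by simpa using hX 4
    exact ⟨hX1, (mul_eq_zero.1 hX4).resolve_right hl2, hX5⟩
  · ext j; simp [vecMul, dotProduct, Fin.sum_univ_five, adg531, bracketg531, h2, h3, h4]

theorem forall_vecMul_adg532_eq_zero_iff {l : ℝ} (hl : l ≠ 0) (F : Fin 5 → ℝ) :
    (∀ U, F ᵥ* adg532 l U = 0) ↔ F 2 = 0 ∧ F 3 = 0 ∧ F 4 = 0 := by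
  refine ⟨fun h => ?_, fun ⟨h2, h3, h4⟩ U => ?_⟩
  · have hX (k : Fin 5) := congrFun (h (Pi.single k 1)) 1
    simp only [vecMul, dotProduct, Fin.sum_univ_five, adg532, bracketg532, of_apply] at hX
    have hX1 : F 2 = 0 := by simpa using hX 0
    have hX4 : F 3 = 0 := by simpa using hX 3
    have hX5 : F 4 * l = 0 := by simpa using hX 4
    exact ⟨hX1, hX4, (mul_eq_zero.1 hX5).resolve_right hl⟩
  · ext j; simp [vecMul, dotProduct, Fin.sum_univ_five, adg532, bracketg532, h2, h3, h4]

theorem forall_vecMul_adg533_eq_zero_iff (l : ℝ) (F : Fin 5 → ℝ) :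
    (∀ U, F ᵥ* adg533 l U = 0) ↔ F 2 = 0 ∧ F 3 = 0 ∧ F 4 = 0 := by
  refine ⟨fun h => ?_, fun ⟨h2, h3, h4⟩ U => ?_⟩
  · have hX (k : Fin 5) := congrFun (h (Pi.single k 1)) 1
    simp only [vecMul, dotProduct, Fin.sum_univ_five, adg533, bracketg533, of_apply] at hX
    exact ⟨by simpa using hX 0, by simpa using hX 3, by simpa using hX 4⟩
  · ext j; simp [vecMul, dotProduct, Fin.sum_univ_five, adg533, bracketg533, h2, h3, h4]

theorem forall_vecMul_adg534_eq_zero_iff (F : Fin 5 → ℝ) :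
    (∀ U, F ᵥ* adg534 U = 0) ↔ F 2 = 0 ∧ F 3 = 0 ∧ F 4 = 0 := by
  refine ⟨fun h => ?_, fun ⟨h2, h3, h4⟩ U => ?_⟩
  · have hX (k : Fin 5) := congrFun (h (Pi.single k 1)) 1
    simp only [vecMul, dotProduct, Fin.sum_univ_five, adg534, bracketg534, of_apply] at hX
    exact ⟨by simpa using hX 0, by simpa using hX 3, by simpa using hX 4⟩
  · ext j; simp [vecMul, dotProduct, Fin.sum_univ_five, adg534, bracketg534, h2, h3, h4]

theorem forall_vecMul_adg535_eq_zero_iff (l : ℝ) (F : Fin 5 → ℝ) :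
    (∀ U, F ᵥ* adg535 l U = 0) ↔ F 2 = 0 ∧ F 3 = 0 ∧ F 4 = 0 := by
  refine ⟨fun h => ?_, fun ⟨h2, h3, h4⟩ U => ?_⟩
  · have hX (k : Fin 5) := congrFun (h (Pi.single k 1)) 1
    simp only [vecMul, dotProduct, Fin.sum_univ_five, adg535, bracketg535, of_apply] at hX
    have hX1 : F 2 = 0 := by simpa using hX 0
    have hX4 : F 3 = 0 := by simpa using hX 3
    have hX5 : F 3 = -F 4 := by simpa [neg_add_eq_zero] using hX 4
    exact ⟨hX1, hX4, by linarith⟩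
  · ext j; simp [vecMul, dotProduct, Fin.sum_univ_five, adg535, bracketg535, h2, h3, h4]

theorem forall_vecMul_adg536_eq_zero_iff {l : ℝ} (hl : l ≠ 0) (F : Fin 5 → ℝ) :
    (∀ U, F ᵥ* adg536 l U = 0) ↔ F 2 = 0 ∧ F 3 = 0 ∧ F 4 = 0 := by
  refine ⟨fun h => ?_, fun ⟨h2, h3, h4⟩ U => ?_⟩
  · have hX (k : Fin 5) := congrFun (h (Pi.single k 1)) 1
    simp only [vecMul, dotProduct, Fin.sum_univ_five, adg536, bracketg536, of_apply] at hX
    have hX1 : F 2 = 0 := by simpa using hX 0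
    have hX4 : F 2 = -F 3 := by simpa [neg_add_eq_zero] using hX 3
    have hX5 : F 4 * l = 0 := by simpa using hX 4
    exact ⟨hX1, by linarith, (mul_eq_zero.1 hX5).resolve_right hl⟩
  · ext j; simp [vecMul, dotProduct, Fin.sum_univ_five, adg536, bracketg536, h2, h3, h4]

theorem forall_vecMul_adg537_eq_zero_iff (F : Fin 5 → ℝ) :
    (∀ U, F ᵥ* adg537 U = 0) ↔ F 2 = 0 ∧ F 3 = 0 ∧ F 4 = 0 := by
  refine ⟨fun h => ?_, fun ⟨h2, h3, h4⟩ U => ?_⟩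
  · have hX (k : Fin 5) := congrFun (h (Pi.single k 1)) 1
    simp only [vecMul, dotProduct, Fin.sum_univ_five, adg537, bracketg537, of_apply] at hX
    have hX1 : F 2 = 0 := by simpa using hX 0
    have hX4 : F 2 = -F 3 := by simpa [neg_add_eq_zero] using hX 3
    have hX5 : F 3 = -F 4 := by simpa [neg_add_eq_zero] using hX 4
    exact ⟨hX1, by linarith, by linarith⟩
  · ext j; simp [vecMul, dotProduct, Fin.sum_univ_five, adg537, bracketg537, h2, h3, h4]

theorem forall_vecMul_adg538_eq_zero_iff {l : ℝ} (hl : l ≠ 0) (φ : ℝ) (F : Fin 5 → ℝ) :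
    (∀ U, F ᵥ* adg538 l φ U = 0) ↔ F 2 = 0 ∧ F 3 = 0 ∧ F 4 = 0 := by
  refine ⟨fun h => ?_, fun ⟨h2, h3, h4⟩ U => ?_⟩
  · have hX (k : Fin 5) := congrFun (h (Pi.single k 1)) 1
    simp only [vecMul, dotProduct, Fin.sum_univ_five, adg538, bracketg538, of_apply] at hX
    have hX1 : F 2 = 0 := by simpa using hX 0
    have hX3 : F 2 * Real.cos φ = -(F 3 * Real.sin φ) := by simpa [neg_add_eq_zero] using hX 2
    have hX4 : F 2 * Real.sin φ - F 3 * Real.cos φ = 0 := by simpa [sub_eq_add_neg] using hX 3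
    have hX5 : F 4 * l = 0 := by simpa using hX 4
    refine ⟨hX1, ?_, (mul_eq_zero.1 hX5).resolve_right hl⟩
    linear_combination Real.sin φ * hX3 - Real.cos φ * hX4 - F 3 * Real.sin_sq_add_cos_sq φ
  · ext j; simp [vecMul, dotProduct, Fin.sum_univ_five, adg538, bracketg538, h2, h3, h4]

theorem singleton_orbits_general (l1 l2 l2' l3' l5' l6' l8' φ : ℝ)
    (h20 : l2 ≠ 0)
    (h2'0 : l2' ≠ 0)
    (h6'0 : l6' ≠ 0) (h8'0 : l8' ≠ 0) :
    ((∀ F : Fin 5 → ℝ, (orbitg531 l1 l2 F = {F} ↔ F 2 = 0 ∧ F 3 = 0 ∧ F 4 = 0)) ∧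
      (⋃ F ∈ {F : Fin 5 → ℝ | (orbitg531 l1 l2 F).Nontrivial}, orbitg531 l1 l2 F)
        = {F : Fin 5 → ℝ | ¬(F 2 = 0 ∧ F 3 = 0 ∧ F 4 = 0)}) ∧
    ((∀ F : Fin 5 → ℝ, (orbitg532 l2' F = {F} ↔ F 2 = 0 ∧ F 3 = 0 ∧ F 4 = 0)) ∧
      (⋃ F ∈ {F : Fin 5 → ℝ | (orbitg532 l2' F).Nontrivial}, orbitg532 l2' F)
        = {F : Fin 5 → ℝ | ¬(F 2 = 0 ∧ F 3 = 0 ∧ F 4 = 0)}) ∧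
    ((∀ F : Fin 5 → ℝ, (orbitg533 l3' F = {F} ↔ F 2 = 0 ∧ F 3 = 0 ∧ F 4 = 0)) ∧
      (⋃ F ∈ {F : Fin 5 → ℝ | (orbitg533 l3' F).Nontrivial}, orbitg533 l3' F)
        = {F : Fin 5 → ℝ | ¬(F 2 = 0 ∧ F 3 = 0 ∧ F 4 = 0)}) ∧
    ((∀ F : Fin 5 → ℝ, (orbitg534 F = {F} ↔ F 2 = 0 ∧ F 3 = 0 ∧ F 4 = 0)) ∧
      (⋃ F ∈ {F : Fin 5 → ℝ | (orbitg534 F).Nontrivial}, orbitg534 F)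
        = {F : Fin 5 → ℝ | ¬(F 2 = 0 ∧ F 3 = 0 ∧ F 4 = 0)}) ∧
    ((∀ F : Fin 5 → ℝ, (orbitg535 l5' F = {F} ↔ F 2 = 0 ∧ F 3 = 0 ∧ F 4 = 0)) ∧
      (⋃ F ∈ {F : Fin 5 → ℝ | (orbitg535 l5' F).Nontrivial}, orbitg535 l5' F)
        = {F : Fin 5 → ℝ | ¬(F 2 = 0 ∧ F 3 = 0 ∧ F 4 = 0)}) ∧
    ((∀ F : Fin 5 → ℝ, (orbitg536 l6' F = {F} ↔ F 2 = 0 ∧ F 3 = 0 ∧ F 4 = 0)) ∧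
      (⋃ F ∈ {F : Fin 5 → ℝ | (orbitg536 l6' F).Nontrivial}, orbitg536 l6' F)
        = {F : Fin 5 → ℝ | ¬(F 2 = 0 ∧ F 3 = 0 ∧ F 4 = 0)}) ∧
    ((∀ F : Fin 5 → ℝ, (orbitg537 F = {F} ↔ F 2 = 0 ∧ F 3 = 0 ∧ F 4 = 0)) ∧
      (⋃ F ∈ {F : Fin 5 → ℝ | (orbitg537 F).Nontrivial}, orbitg537 F)
        = {F : Fin 5 → ℝ | ¬(F 2 = 0 ∧ F 3 = 0 ∧ F 4 = 0)}) ∧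
    ((∀ F : Fin 5 → ℝ, (orbitg538 l8' φ F = {F} ↔ F 2 = 0 ∧ F 3 = 0 ∧ F 4 = 0)) ∧
      (⋃ F ∈ {F : Fin 5 → ℝ | (orbitg538 l8' φ F).Nontrivial}, orbitg538 l8' φ F)
        = {F : Fin 5 → ℝ | ¬(F 2 = 0 ∧ F 3 = 0 ∧ F 4 = 0)}) ∧
    IsOpen {F : Fin 5 → ℝ | ¬(F 2 = 0 ∧ F 3 = 0 ∧ F 4 = 0)} := by
  refine ⟨
    coadjointOrbit_classification (adg531_smul l1 l2) (forall_vecMul_adg531_eq_zero_iff h20),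
    coadjointOrbit_classification (adg532_smul l2') (forall_vecMul_adg532_eq_zero_iff h2'0),
    coadjointOrbit_classification (adg533_smul l3') (forall_vecMul_adg533_eq_zero_iff l3'),
    coadjointOrbit_classification adg534_smul forall_vecMul_adg534_eq_zero_iff,
    coadjointOrbit_classification (adg535_smul l5') (forall_vecMul_adg535_eq_zero_iff l5'),
    coadjointOrbit_classification (adg536_smul l6') (forall_vecMul_adg536_eq_zero_iff h6'0),
    coadjointOrbit_classification adg537_smul forall_vecMul_adg537_eq_zero_iff,
    coadjointOrbit_classification (adg538_smul l8' φ) (forall_vecMul_adg538_eq_zero_iff h8'0 φ),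
    ?_⟩
  have hclosed : IsClosed {F : Fin 5 → ℝ | F 2 = 0 ∧ F 3 = 0 ∧ F 4 = 0} :=
    (isClosed_eq (continuous_apply 2) continuous_const).inter
      ((isClosed_eq (continuous_apply 3) continuous_const).inter
        (isClosed_eq (continuous_apply 4) continuous_const))
  exact hclosed.isOpen_compl

/-- For each of the eight algebras, Ω_F = {F} iff F(X3) = F(X4) = F(X5) = 0; hence the
union V of all orbits with more than one point is {F | (F(X3),F(X4),F(X5)) ≠ (0,0,0)},
which is open in g*. -/
theorem singleton_orbits (l1 l2 l2' l3' l5' l6' l8' φ : ℝ)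
    (h10 : l1 ≠ 0) (h11 : l1 ≠ 1) (h20 : l2 ≠ 0) (h21 : l2 ≠ 1) (h12 : l1 ≠ l2)
    (h2'0 : l2' ≠ 0) (h2'1 : l2' ≠ 1) (h3'1 : l3' ≠ 1) (h5'1 : l5' ≠ 1)
    (h6'0 : l6' ≠ 0) (h6'1 : l6' ≠ 1) (h8'0 : l8' ≠ 0) (hφ0 : 0 < φ) (hφπ : φ < Real.pi) :
    ((∀ F : Fin 5 → ℝ, (orbitg531 l1 l2 F = {F} ↔ F 2 = 0 ∧ F 3 = 0 ∧ F 4 = 0)) ∧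
      (⋃ F ∈ {F : Fin 5 → ℝ | (orbitg531 l1 l2 F).Nontrivial}, orbitg531 l1 l2 F)
        = {F : Fin 5 → ℝ | ¬(F 2 = 0 ∧ F 3 = 0 ∧ F 4 = 0)}) ∧
    ((∀ F : Fin 5 → ℝ, (orbitg532 l2' F = {F} ↔ F 2 = 0 ∧ F 3 = 0 ∧ F 4 = 0)) ∧
      (⋃ F ∈ {F : Fin 5 → ℝ | (orbitg532 l2' F).Nontrivial}, orbitg532 l2' F)
        = {F : Fin 5 → ℝ | ¬(F 2 = 0 ∧ F 3 = 0 ∧ F 4 = 0)}) ∧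
    ((∀ F : Fin 5 → ℝ, (orbitg533 l3' F = {F} ↔ F 2 = 0 ∧ F 3 = 0 ∧ F 4 = 0)) ∧
      (⋃ F ∈ {F : Fin 5 → ℝ | (orbitg533 l3' F).Nontrivial}, orbitg533 l3' F)
        = {F : Fin 5 → ℝ | ¬(F 2 = 0 ∧ F 3 = 0 ∧ F 4 = 0)}) ∧
    ((∀ F : Fin 5 → ℝ, (orbitg534 F = {F} ↔ F 2 = 0 ∧ F 3 = 0 ∧ F 4 = 0)) ∧
      (⋃ F ∈ {F : Fin 5 → ℝ | (orbitg534 F).Nontrivial}, orbitg534 F)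
        = {F : Fin 5 → ℝ | ¬(F 2 = 0 ∧ F 3 = 0 ∧ F 4 = 0)}) ∧
    ((∀ F : Fin 5 → ℝ, (orbitg535 l5' F = {F} ↔ F 2 = 0 ∧ F 3 = 0 ∧ F 4 = 0)) ∧
      (⋃ F ∈ {F : Fin 5 → ℝ | (orbitg535 l5' F).Nontrivial}, orbitg535 l5' F)
        = {F : Fin 5 → ℝ | ¬(F 2 = 0 ∧ F 3 = 0 ∧ F 4 = 0)}) ∧
    ((∀ F : Fin 5 → ℝ, (orbitg536 l6' F = {F} ↔ F 2 = 0 ∧ F 3 = 0 ∧ F 4 = 0)) ∧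
      (⋃ F ∈ {F : Fin 5 → ℝ | (orbitg536 l6' F).Nontrivial}, orbitg536 l6' F)
        = {F : Fin 5 → ℝ | ¬(F 2 = 0 ∧ F 3 = 0 ∧ F 4 = 0)}) ∧
    ((∀ F : Fin 5 → ℝ, (orbitg537 F = {F} ↔ F 2 = 0 ∧ F 3 = 0 ∧ F 4 = 0)) ∧
      (⋃ F ∈ {F : Fin 5 → ℝ | (orbitg537 F).Nontrivial}, orbitg537 F)
        = {F : Fin 5 → ℝ | ¬(F 2 = 0 ∧ F 3 = 0 ∧ F 4 = 0)}) ∧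
    ((∀ F : Fin 5 → ℝ, (orbitg538 l8' φ F = {F} ↔ F 2 = 0 ∧ F 3 = 0 ∧ F 4 = 0)) ∧
      (⋃ F ∈ {F : Fin 5 → ℝ | (orbitg538 l8' φ F).Nontrivial}, orbitg538 l8' φ F)
        = {F : Fin 5 → ℝ | ¬(F 2 = 0 ∧ F 3 = 0 ∧ F 4 = 0)}) ∧
    IsOpen {F : Fin 5 → ℝ | ¬(F 2 = 0 ∧ F 3 = 0 ∧ F 4 = 0)} :=
  singleton_orbits_general l1 l2 l2' l3' l5' l6' l8' φ h20 h2'0 h6'0 h8'0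
end
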